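/- Let G be a finite simple graph with no cycles of even length. Then all orientations of G have the same skew-characteristic polynomial: for any two orientations G₁, G₂ of G, the skew-adjacency matrices S(G₁) and S(G₂) have equal characteristic polynomials. -/

import Mathlib

open Matrix

/-- `S` is the skew-adjacency matrix of an orientation of the simple graph `G`. -/
def IsOrientationMatrix {n : ℕ} (G : SimpleGraph (Fin n)) (S : Matrix (Fin n) (Fin n) ℝ) :
    Prop :=
  (∀ i j, G.Adj i j → (S i j = 1 ∧ S j i = -1) ∨ (S i j = -1 ∧ S j i = 1)) ∧
  (∀ i j, ¬G.Adj i j → S i j = 0)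

/-! Expand `det (X • 1 - S)` over permutations `σ`. If `σ` has a cycle of length at least three
whose term does not vanish, that cycle runs along edges of `G` and so traces a cycle of `G`, which
is odd. Reversing it keeps the sign of `σ` and, `S` being skew-symmetric, multiplies the term by
`(-1) ^ length = -1`; reversing the cycle through the least point moved by `σ ^ 2` is an involution,
so all such terms cancel. The remaining permutations are involutions, whose terms involve only the
diagonal of `S` and the products `S i j * S j i`, which equal `-1` on edges whatever the
orientation. -/

open Equiv Equiv.Perm Finset

theorem SimpleGraph.exists_isCycle_length_eq_card_support {V : Type*} [Fintype V] [DecidableEq V]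
    {G : SimpleGraph V} {c : Perm V} (hc : c.IsCycle) (h3 : 3 ≤ c.support.card)
    (hadj : ∀ x, c x ≠ x → G.Adj x (c x)) :
    ∃ (u : V) (w : G.Walk u u), w.IsCycle ∧ w.length = c.support.card := by
  obtain ⟨a, ha, -⟩ := id hc
  set l := List.iterate c a (c.support.card + 1)
  have hne : l ≠ [] := by simp [l]
  have hchain : l.IsChain G.Adj := by
    rw [List.isChain_iff_getElem]
    intro i hi
    simp only [l, List.getElem_iterate, Function.iterate_succ_apply', iterate_eq_pow]
    exact hadj _ (by simpa using ha)
  have hhead : l.head hne = a := rfl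
  have hlast : l.getLast hne = a := by
    rw [List.getLast_eq_getElem, List.getElem_iterate, List.length_iterate, Nat.add_sub_cancel,
      iterate_eq_pow, ← hc.orderOf, pow_orderOf_eq_one, coe_one, id]
  have htail : l.tail = c.toList (c a) := by
    rw [Perm.toList, cycleOf_self_apply, hc.cycleOf_eq ha]
    rfl
  set w := (Walk.ofSupport l hne hchain).copy hhead hlast
  have hlength : w.length = c.support.card := by
    rw [Walk.length_copy, Walk.length_ofSupport, List.length_iterate, Nat.add_sub_cancel]
  refine ⟨a, w, ?_, hlength⟩
  rw [Walk.isCycle_iff_isPath_tail_and_le_length, Walk.isPath_def, hlength,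
    Walk.support_tail_of_not_nil _ (Walk.not_nil_iff_lt_length.2 (by omega)),
    Walk.support_copy, Walk.support_ofSupport, htail]
  exact ⟨nodup_toList _ _, h3⟩

namespace Equiv.Perm

theorem apply_apply_of_sq_eq_one {α : Type*} {σ : Perm α} (hσ : σ ^ 2 = 1) (i : α) :
    σ (σ i) = i := by
  rw [← mul_apply, ← sq, hσ, one_apply]

theorem prod_eq_prod_fixed_mul_prod_pairs {α M : Type*} [Fintype α] [LinearOrder α]
    [CommMonoid M] {σ : Perm α} (hσ : σ ^ 2 = 1) (f : α → M) :
    ∏ i, f i = (∏ i with σ i = i, f i) * ∏ i with i < σ i, f i * f (σ i) := by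
  have hσσ := apply_apply_of_sq_eq_one hσ
  have hswap : ∏ i with i < σ i, f (σ i) = ∏ i with σ i < i, f i :=
    prod_nbij' σ σ (by simp [hσσ]) (by simp [hσσ]) (by simp [hσσ]) (by simp [hσσ]) (by simp)
  rw [prod_mul_distrib, hswap, ← prod_filter_mul_prod_filter_not univ (fun i => σ i = i),
    ← prod_filter_mul_prod_filter_not (univ.filter fun i => ¬σ i = i) (fun i => i < σ i),
    filter_filter, filter_filter]
  congr 3 <;> ext i <;> simp only [mem_filter, mem_univ, true_and]
  · exact ⟨fun h => h.2, fun h => ⟨h.ne', h⟩⟩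
  · exact ⟨fun h => lt_of_le_of_ne (not_lt.1 h.2) h.1, fun h => ⟨h.ne, not_lt.2 h.le⟩⟩

theorem apply_ne_self_of_pow_apply_ne_self {α : Type*} {σ : Perm α} {a : α} {k : ℕ}
    (ha : (σ ^ k) a ≠ a) : σ a ≠ a :=
  fun h => ha (pow_apply_eq_self_of_apply_eq_self h k)

variable {α : Type*} [Fintype α] [DecidableEq α]

def reverseCycleOf (σ : Perm α) (a : α) : Perm α := σ * (σ.cycleOf a)⁻¹ * (σ.cycleOf a)⁻¹

variable {σ : Perm α} {a x : α}

theorem cycleOf_apply_of_mem_support (hx : x ∈ (σ.cycleOf a).support) : σ.cycleOf a x = σ x :=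
  (mem_support_cycleOf_iff.1 hx).1.cycleOf_apply

theorem reverseCycleOf_apply_of_mem_support (hx : x ∈ (σ.cycleOf a).support) :
    σ.reverseCycleOf a x = (σ.cycleOf a)⁻¹ x := by
  rw [← support_inv] at hx
  have hy := apply_mem_support.2 (apply_mem_support.2 hx)
  rw [support_inv] at hy
  rw [reverseCycleOf, mul_apply, mul_apply, ← cycleOf_apply_of_mem_support hy]
  simp

theorem reverseCycleOf_apply_of_notMem_support (hx : x ∉ (σ.cycleOf a).support) :
    σ.reverseCycleOf a x = σ x := by
  have hx' : (σ.cycleOf a)⁻¹ x = x := by rwa [inv_eq_iff_eq, eq_comm, ← notMem_support]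
  rw [reverseCycleOf, mul_apply, mul_apply, hx', hx']

theorem sign_reverseCycleOf : sign (σ.reverseCycleOf a) = sign σ := by
  simp [reverseCycleOf, mul_assoc]

theorem reverseCycleOf_ne_self (ha : (σ ^ 2) a ≠ a) : σ.reverseCycleOf a ≠ σ := by
  intro h
  rw [reverseCycleOf, mul_assoc, mul_eq_left, ← _root_.mul_inv_rev, inv_eq_one, ← sq] at h
  rw [← cycleOf_pow_apply_self, h, one_apply] at ha
  exact ha rfl

theorem disjoint_mul_inv_cycleOf (ha : σ a ≠ a) : (σ * (σ.cycleOf a)⁻¹).Disjoint (σ.cycleOf a) :=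
  disjoint_mul_inv_of_mem_cycleFactorsFinset
    (cycleOf_mem_cycleFactorsFinset_iff.2 (mem_support.2 ha))

theorem cycleOf_reverseCycleOf (ha : σ a ≠ a) :
    (σ.reverseCycleOf a).cycleOf a = (σ.cycleOf a)⁻¹ := by
  have hdisj := disjoint_mul_inv_cycleOf ha
  have hca : σ.cycleOf a a ≠ a := by rwa [cycleOf_apply_self]
  rw [reverseCycleOf, hdisj.inv_right.cycleOf_mul_distrib,
    (cycleOf_eq_one_iff _).2 ((hdisj a).resolve_right hca), one_mul,
    (isCycle_cycleOf σ ha).inv.cycleOf_eq]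
  rwa [Ne, inv_eq_iff_eq, eq_comm]

theorem reverseCycleOf_reverseCycleOf (ha : σ a ≠ a) :
    (σ.reverseCycleOf a).reverseCycleOf a = σ := by
  rw [reverseCycleOf, cycleOf_reverseCycleOf ha, reverseCycleOf]
  group

theorem support_sq_reverseCycleOf (ha : σ a ≠ a) :
    ((σ.reverseCycleOf a) ^ 2).support = (σ ^ 2).support := by
  set c := σ.cycleOf a
  set τ := σ * c⁻¹
  have hdisj : τ.Disjoint c := disjoint_mul_inv_cycleOf ha
  have hsq : ∀ d : Perm α, τ.Disjoint d →
      ((τ * d) ^ 2).support = (τ ^ 2).support ∪ (d ^ 2).support := fun d hd => by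
    rw [hd.commute.mul_pow, (hd.pow_disjoint_pow 2 2).support_mul]
  have hσ : σ = τ * c := by simp [τ]
  rw [reverseCycleOf, hsq _ hdisj.inv_right, inv_pow, support_inv, hσ, hsq _ hdisj]

theorem three_le_card_support_cycleOf (ha : (σ ^ 2) a ≠ a) :
    3 ≤ (σ.cycleOf a).support.card := by
  have ha' := apply_ne_self_of_pow_apply_ne_self ha
  rw [← (isCycle_cycleOf σ ha').orderOf]
  have hsq : ¬ orderOf (σ.cycleOf a) ∣ 2 := by
    rw [orderOf_dvd_iff_pow_eq_one]
    intro h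
    apply ha
    rw [← cycleOf_pow_apply_self, h, one_apply]
  have hpos := orderOf_pos (σ.cycleOf a)
  by_contra! h
  interval_cases orderOf (σ.cycleOf a) <;> norm_num at hsq

end Equiv.Perm

theorem Matrix.charmatrix_mul_charmatrix_swap {α R : Type*} [Fintype α] [DecidableEq α]
    [CommRing R] (S : Matrix α α R) {i j : α} (hij : i ≠ j) :
    charmatrix S i j * charmatrix S j i = Polynomial.C (S i j * S j i) := by
  rw [charmatrix_apply_ne _ _ _ hij, charmatrix_apply_ne _ _ _ hij.symm, neg_mul_neg, map_mul]

theorem Matrix.prod_charmatrix_reverseCycleOf {α R : Type*} [Fintype α] [DecidableEq α]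
    [CommRing R] {S : Matrix α α R} (hS : Sᵀ = -S) (σ : Perm α) (a : α) :
    ∏ i, charmatrix S (σ.reverseCycleOf a i) i =
      (-1) ^ (σ.cycleOf a).support.card * ∏ i, charmatrix S (σ i) i := by
  set c := σ.cycleOf a
  have hskew : ∀ i j, i ≠ j → charmatrix S i j = -charmatrix S j i := fun i j hij => by
    rw [charmatrix_apply_ne _ _ _ hij, charmatrix_apply_ne _ _ _ hij.symm, ← transpose_apply S,
      hS, Matrix.neg_apply, map_neg]
  have hcycle : ∏ i ∈ c.support, charmatrix S (σ.reverseCycleOf a i) i =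
      ∏ i ∈ c.support, -charmatrix S (σ i) i := calc
    _ = ∏ i ∈ c.support, charmatrix S (c⁻¹ i) i :=
      prod_congr rfl fun i hi => by rw [reverseCycleOf_apply_of_mem_support hi]
    _ = ∏ i ∈ c.support, charmatrix S i (c i) :=
      (c.prod_comp _ (fun i => charmatrix S (c⁻¹ i) i) fun i hi => mem_support.2 hi).symm.trans
        (by simp)
    _ = ∏ i ∈ c.support, -charmatrix S (σ i) i :=
      prod_congr rfl fun i hi => by
        rw [hskew _ _ (mem_support.1 hi).symm, cycleOf_apply_of_mem_support hi]
  have hrest : ∏ i ∈ c.supportᶜ, charmatrix S (σ.reverseCycleOf a i) i =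
      ∏ i ∈ c.supportᶜ, charmatrix S (σ i) i :=
    prod_congr rfl fun i hi => by rw [reverseCycleOf_apply_of_notMem_support (mem_compl.1 hi)]
  rw [← prod_mul_prod_compl c.support, hcycle, hrest, prod_neg, mul_assoc,
    prod_mul_prod_compl c.support (fun i => charmatrix S (σ i) i)]

namespace IsOrientationMatrix

variable {n : ℕ} {G : SimpleGraph (Fin n)} {S : Matrix (Fin n) (Fin n) ℝ}

theorem adj_of_apply_ne_zero (hS : IsOrientationMatrix G S) {i j : Fin n} (h : S i j ≠ 0) :
    G.Adj i j :=
  not_not.1 fun hij => h (hS.2 i j hij)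

theorem transpose_eq_neg (hS : IsOrientationMatrix G S) : Sᵀ = -S := by
  ext i j
  rw [transpose_apply, Matrix.neg_apply]
  by_cases hij : G.Adj i j
  · rcases hS.1 i j hij with ⟨h₁, h₂⟩ | ⟨h₁, h₂⟩ <;> simp [h₁, h₂]
  · rw [hS.2 i j hij, hS.2 j i fun h => hij h.symm, neg_zero]

theorem mul_apply_swap_eq {S₁ S₂ : Matrix (Fin n) (Fin n) ℝ} (h₁ : IsOrientationMatrix G S₁)
    (h₂ : IsOrientationMatrix G S₂) (i j : Fin n) : S₁ i j * S₁ j i = S₂ i j * S₂ j i := by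
  by_cases hij : G.Adj i j
  · rcases h₁.1 i j hij with ⟨e₁, e₂⟩ | ⟨e₁, e₂⟩ <;>
      rcases h₂.1 i j hij with ⟨f₁, f₂⟩ | ⟨f₁, f₂⟩ <;> simp [e₁, e₂, f₁, f₂]
  · rw [h₁.2 i j hij, h₂.2 i j hij, zero_mul, zero_mul]

theorem odd_card_support_cycleOf (hS : IsOrientationMatrix G S)
    (hodd : ∀ (u : Fin n) (w : G.Walk u u), w.IsCycle → Odd w.length)
    {σ : Perm (Fin n)} {a : Fin n} (ha : (σ ^ 2) a ≠ a)
    (hprod : ∏ i, charmatrix S (σ i) i ≠ 0) :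
    Odd (σ.cycleOf a).support.card := by
  have ha' := apply_ne_self_of_pow_apply_ne_self ha
  have hadj : ∀ x, σ.cycleOf a x ≠ x → G.Adj x (σ.cycleOf a x) := fun x hx => by
    rw [cycleOf_apply_of_mem_support (mem_support.2 hx)]
    have hσx : σ x ≠ x := by rwa [← cycleOf_apply_of_mem_support (mem_support.2 hx)]
    have hentry := prod_ne_zero_iff.1 hprod x (mem_univ x)
    rw [charmatrix_apply_ne _ _ _ hσx, neg_ne_zero, Polynomial.C_ne_zero] at hentry
    exact (hS.adj_of_apply_ne_zero hentry).symm
  obtain ⟨u, w, hw, hlength⟩ := SimpleGraph.exists_isCycle_length_eq_card_support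
    (isCycle_cycleOf σ ha') (three_le_card_support_cycleOf ha) hadj
  exact hlength ▸ hodd u w hw

theorem sum_filter_sq_ne_one_eq_zero (hS : IsOrientationMatrix G S)
    (hodd : ∀ (u : Fin n) (w : G.Walk u u), w.IsCycle → Odd w.length) :
    ∑ σ : Perm (Fin n) with σ ^ 2 ≠ 1, sign σ • ∏ i, charmatrix S (σ i) i = 0 := by
  have hne : ∀ σ ∈ univ.filter fun σ : Perm (Fin n) => σ ^ 2 ≠ 1, (σ ^ 2).support.Nonempty :=
    fun σ hσ => nonempty_iff_ne_empty.2 (support_eq_empty_iff.not.2 (mem_filter.1 hσ).2)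
  refine sum_involution (fun σ hσ => σ.reverseCycleOf ((σ ^ 2).support.min' (hne σ hσ)))
    ?_ ?_ ?_ ?_
  · intro σ hσ
    set a := (σ ^ 2).support.min' (hne σ hσ)
    have ha : (σ ^ 2) a ≠ a := mem_support.1 (min'_mem _ _)
    rw [sign_reverseCycleOf, prod_charmatrix_reverseCycleOf hS.transpose_eq_neg]
    by_cases hprod : ∏ i, charmatrix S (σ i) i = 0
    · simp [hprod]
    · rw [(hS.odd_card_support_cycleOf hodd ha hprod).neg_one_pow, neg_one_mul, smul_neg,
        add_neg_cancel]
  · intro σ hσ _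
    exact reverseCycleOf_ne_self (mem_support.1 (min'_mem _ _))
  · intro σ hσ
    have ha := mem_support.1 (min'_mem _ (hne σ hσ))
    simp only [mem_filter, mem_univ, true_and, ne_eq, ← support_eq_empty_iff,
      support_sq_reverseCycleOf (apply_ne_self_of_pow_apply_ne_self ha)]
    exact (hne σ hσ).ne_empty
  · intro σ hσ
    have ha := mem_support.1 (min'_mem _ (hne σ hσ))
    simp only [support_sq_reverseCycleOf (apply_ne_self_of_pow_apply_ne_self ha)]
    exact reverseCycleOf_reverseCycleOf (apply_ne_self_of_pow_apply_ne_self ha)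

theorem charpoly_eq_sum_sq_eq_one (hS : IsOrientationMatrix G S)
    (hodd : ∀ (u : Fin n) (w : G.Walk u u), w.IsCycle → Odd w.length) :
    S.charpoly = ∑ σ : Perm (Fin n) with σ ^ 2 = 1, sign σ • ∏ i, charmatrix S (σ i) i := by
  rw [charpoly, det_apply, ← sum_filter_add_sum_filter_not univ (fun σ => σ ^ 2 = 1),
    hS.sum_filter_sq_ne_one_eq_zero hodd, add_zero]

theorem prod_charmatrix_eq_of_sq_eq_one {S₁ S₂ : Matrix (Fin n) (Fin n) ℝ}
    (h₁ : IsOrientationMatrix G S₁) (h₂ : IsOrientationMatrix G S₂) {σ : Perm (Fin n)}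
    (hσ : σ ^ 2 = 1) :
    ∏ i, charmatrix S₁ (σ i) i = ∏ i, charmatrix S₂ (σ i) i := by
  rw [prod_eq_prod_fixed_mul_prod_pairs hσ, prod_eq_prod_fixed_mul_prod_pairs hσ]
  congr 1
  · refine prod_congr rfl fun i hi => ?_
    rw [(mem_filter.1 hi).2, charmatrix_apply_eq, charmatrix_apply_eq, h₁.2 i i (G.irrefl),
      h₂.2 i i (G.irrefl)]
  · refine prod_congr rfl fun i hi => ?_
    have hne := (mem_filter.1 hi).2.ne'
    rw [apply_apply_of_sq_eq_one hσ, charmatrix_mul_charmatrix_swap _ hne,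
      charmatrix_mul_charmatrix_swap _ hne, mul_apply_swap_eq h₁ h₂]

end IsOrientationMatrix

theorem stmt_14 (n : ℕ) (G : SimpleGraph (Fin n))
    (hodd : ∀ (u : Fin n) (w : G.Walk u u), w.IsCycle → Odd w.length)
    (S₁ S₂ : Matrix (Fin n) (Fin n) ℝ)
    (h₁ : IsOrientationMatrix G S₁) (h₂ : IsOrientationMatrix G S₂) :
    S₁.charpoly = S₂.charpoly := by
  rw [h₁.charpoly_eq_sum_sq_eq_one hodd, h₂.charpoly_eq_sum_sq_eq_one hodd]
  exact sum_congr rfl fun σ hσ =>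
    congrArg _ (IsOrientationMatrix.prod_charmatrix_eq_of_sq_eq_one h₁ h₂ (mem_filter.1 hσ).2)
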